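/- arXiv:2105.09631 — 3 statements merged into one kernel-verified Lean document; each statement's English description precedes it below -/
import Mathlib

section
/- The symmetric harmonic product satisfies the shift formula: for all w₁, w₂ ∈ 𝔥' one has x w₁ ⊛̃ w₂ = w₁ ⊛̃ x w₂ = x(w₁ ⊛̃ w₂). -/
open scoped BigOperators

abbrev Ltr := Fin 2

/-- `𝔥 = ℚ⟨x,y⟩`, realized as the monoid algebra of the free monoid on two letters. -/
abbrev H := MonoidAlgebra ℚ (FreeMonoid Ltr)

/-- The word `u₁⋯u_m` as an element of `𝔥`. -/
noncomputable def wrd (l : List Ltr) : H := MonoidAlgebra.of ℚ (FreeMonoid Ltr) (FreeMonoid.ofList l)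

/-- The generator `x`. -/
noncomputable def Xh : H := wrd [0]
/-- The generator `y`. -/
noncomputable def Yh : H := wrd [1]

/-- `e₀ = x`, `e₁ = -y`. -/
noncomputable def eH (a : Ltr) : H := if a = 0 then Xh else -Yh

/-- The product `e_{a₁}⋯e_{a_m} ∈ 𝔥` for an `e`-word. -/
noncomputable def ew (l : List Ltr) : H := ((-1 : ℚ) ^ (l.count 1)) • wrd l

/-- The symmetric harmonic product on basis `e`-words:
`e_a ⊛̃ e_{b₁}⋯e_{bₙ} = e_{b₁}⋯e_{bₙ} ⊛̃ e_a = e_{ab₁}⋯e_{abₙ}` and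
`e_a w₁ ⊛̃ e_b w₂ = e_{ab}(w₁ ⊛̃ e_b w₂) + e_{ab}(e_a w₁ ⊛̃ w₂) - e_{ab}e₀(w₁ ⊛̃ w₂)`. -/
noncomputable def mstE : List Ltr → List Ltr → H
  | [a], b :: bs => ew ((b :: bs).map (fun c => a * c))
  | a :: a' :: as, [b] => ew ((a :: a' :: as).map (fun c => c * b))
  | a :: a' :: as, b :: b' :: bs =>
      eH (a * b) * mstE (a' :: as) (b :: b' :: bs)
      + eH (a * b) * mstE (a :: a' :: as) (b' :: bs)
      - eH (a * b) * Xh * mstE (a' :: as) (b' :: bs)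
  | _, _ => 0
termination_by l₁ l₂ => l₁.length + l₂.length

/-- The symmetric harmonic product `⊛̃ : 𝔥' ⊗ 𝔥' → 𝔥'`, extended bilinearly
(using that the word `u₁⋯u_m` equals `(-1)^{#{i : uᵢ = y}} e_{u₁}⋯e_{u_m}`). -/
noncomputable def mst (f g : H) : H :=
  f.coeff.sum fun u cu => g.coeff.sum fun v cv =>
    (cu * cv * (-1 : ℚ) ^ ((FreeMonoid.toList u).count 1)
      * (-1 : ℚ) ^ ((FreeMonoid.toList v).count 1)) •
      mstE (FreeMonoid.toList u) (FreeMonoid.toList v)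

/-! Since `0 * b = 0` in `Fin 2`, every step of the recursion for `e₀ w₁ ⊛̃ e_b w₂` starts with
`e₀ = x`, and by induction on `|w₂|` the second and third terms cancel:
`x(e₀w₁ ⊛̃ w₂) - x·x(w₁ ⊛̃ w₂) = 0`, leaving `x(w₁ ⊛̃ e_b w₂)`; the right-hand version is symmetric.
The empty word must be excluded: `e₀ ⊛̃ w₂ = x^{|w₂|}`, whereas `1 ⊛̃ w₂ = 0` in this encoding. -/

lemma wrd_cons (a : Ltr) (l : List Ltr) : wrd (a :: l) = wrd [a] * wrd l := by
  rw [wrd, wrd, wrd, ← map_mul]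
  rfl

lemma ew_zero_cons (l : List Ltr) : ew ((0 : Ltr) :: l) = Xh * ew l := by
  rw [ew, ew, List.count_cons_of_ne (by decide), wrd_cons, mul_smul_comm, Xh]

lemma eH_zero : eH 0 = Xh := if_pos rfl

lemma mstE_nil_right (l : List Ltr) : mstE l [] = 0 := by
  rcases l with _ | ⟨a, _ | ⟨a', as⟩⟩ <;> simp [mstE]

lemma mstE_zero_cons_left {l₁ : List Ltr} (h₁ : l₁ ≠ []) (l₂ : List Ltr) :
    mstE ((0 : Ltr) :: l₁) l₂ = Xh * mstE l₁ l₂ := by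
  induction l₂ generalizing l₁ with
  | nil => rw [mstE_nil_right, mstE_nil_right, mul_zero]
  | cons b bs ih =>
    obtain ⟨a, as, rfl⟩ := List.exists_cons_of_ne_nil h₁
    rcases bs with _ | ⟨b', bs⟩
    · rcases as with _ | ⟨a', as⟩
      · simp only [mstE, List.map_cons, List.map_nil, zero_mul, ew_zero_cons, mul_comm a]
      · simp only [mstE, List.map_cons, zero_mul, ew_zero_cons]
    · rw [mstE, zero_mul, eH_zero, ih (List.cons_ne_nil a as)]
      noncomm_ring

lemma mstE_zero_cons_right (l₁ : List Ltr) {l₂ : List Ltr} (h₂ : l₂ ≠ []) :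
    mstE l₁ ((0 : Ltr) :: l₂) = Xh * mstE l₁ l₂ := by
  induction l₁ generalizing l₂ with
  | nil => simp [mstE]
  | cons a as ih =>
    obtain ⟨b, bs, rfl⟩ := List.exists_cons_of_ne_nil h₂
    rcases as with _ | ⟨a', as⟩
    · simp only [mstE, List.map_cons, mul_zero, ew_zero_cons]
    · rw [mstE, mul_zero, eH_zero, ih (List.cons_ne_nil b bs)]
      noncomm_ring

lemma toList_ofList_zero_mul (u : FreeMonoid Ltr) :
    FreeMonoid.toList (FreeMonoid.ofList [(0 : Ltr)] * u) = 0 :: FreeMonoid.toList u :=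
  rfl

lemma ofList_zero_mul_injective :
    Function.Injective (FreeMonoid.ofList [(0 : Ltr)] * ·) := fun _ _ h =>
  FreeMonoid.toList.injective (List.cons_injective (congrArg FreeMonoid.toList h))

lemma coeff_Xh_mul (f : H) :
    (Xh * f).coeff = f.coeff.mapDomain (FreeMonoid.ofList [(0 : Ltr)] * ·) := by
  rw [MonoidAlgebra.mul_def]
  show ((Finsupp.single (FreeMonoid.ofList [(0 : Ltr)]) (1 : ℚ)).sum _ : H).coeff = _
  rw [Finsupp.sum_single_index (by simp), Finsupp.mapDomain, MonoidAlgebra.coeff_finsuppSum]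
  refine Finsupp.sum_congr fun v _ => ?_
  rw [one_mul, MonoidAlgebra.coeff_single]

lemma toList_ne_nil_of_mem_support {w : H} (hw : w.coeff 1 = 0) {u : FreeMonoid Ltr}
    (hu : u ∈ w.coeff.support) : FreeMonoid.toList u ≠ [] := fun hnil =>
  Finsupp.mem_support_iff.mp hu ((FreeMonoid.toList.injective hnil : u = 1) ▸ hw)

lemma mst_Xh_mul_left {w₁ : H} (h₁ : w₁.coeff 1 = 0) (w₂ : H) :
    mst (Xh * w₁) w₂ = Xh * mst w₁ w₂ := by
  rw [mst, coeff_Xh_mul, Finsupp.sum_mapDomain_index_inj ofList_zero_mul_injective, mst,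
    Finsupp.mul_sum]
  refine Finsupp.sum_congr fun u hu => ?_
  rw [Finsupp.mul_sum]
  refine Finsupp.sum_congr fun v _ => ?_
  rw [toList_ofList_zero_mul, List.count_cons_of_ne (by decide),
    mstE_zero_cons_left (toList_ne_nil_of_mem_support h₁ hu), mul_smul_comm]

lemma mst_Xh_mul_right (w₁ : H) {w₂ : H} (h₂ : w₂.coeff 1 = 0) :
    mst w₁ (Xh * w₂) = Xh * mst w₁ w₂ := by
  rw [mst, mst, Finsupp.mul_sum]
  refine Finsupp.sum_congr fun u _ => ?_
  rw [coeff_Xh_mul, Finsupp.sum_mapDomain_index_inj ofList_zero_mul_injective, Finsupp.mul_sum]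
  refine Finsupp.sum_congr fun v hv => ?_
  rw [toList_ofList_zero_mul, List.count_cons_of_ne (by decide),
    mstE_zero_cons_right _ (toList_ne_nil_of_mem_support h₂ hv), mul_smul_comm]

/-- For `w₁, w₂ ∈ 𝔥' = y𝔥 ⊕ x𝔥` (no constant term),
`xw₁ ⊛̃ w₂ = w₁ ⊛̃ xw₂ = x(w₁ ⊛̃ w₂)`. -/
theorem stmt2 (w₁ w₂ : H) (h₁ : w₁.coeff (1 : FreeMonoid Ltr) = 0)
    (h₂ : w₂.coeff (1 : FreeMonoid Ltr) = 0) :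
    mst (Xh * w₁) w₂ = Xh * mst w₁ w₂ ∧ mst w₁ (Xh * w₂) = Xh * mst w₁ w₂ :=
  ⟨mst_Xh_mul_left h₁ w₂, mst_Xh_mul_right w₁ h₂⟩
end

section
/- The symmetric harmonic product is compatible with word reversal: for all w₁, w₂ ∈ 𝔥', the reversal of w₁ ⊛̃ w₂ equals (reversal of w₁) ⊛̃ (reversal of w₂). -/
open scoped BigOperators

/-- Word reversal, extended linearly. -/
noncomputable def revH (f : H) : H :=
  MonoidAlgebra.ofCoeff (Finsupp.mapDomain (fun l => FreeMonoid.ofList (FreeMonoid.toList l).reverse) f.coeff)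

/-!
Reversal is an anti-automorphism of `𝔥` fixing `e₀` and `e₁`, and `⊛̃` is bilinear, so it suffices
to treat two `e`-words. The defining recursion of `⊛̃` peels off the *first* letters; the heart of
the proof is that `⊛̃` obeys the mirror-image recursion peeling off the *last* letters,
`w₁e_a ⊛̃ w₂e_b = (w₁ ⊛̃ w₂e_b)e_{ab} + (w₁e_a ⊛̃ w₂)e_{ab} - (w₁ ⊛̃ w₂)e₀e_{ab}`,
which follows by induction on the total length from the left recursion (and commutativity of
`⊛̃` for the case of a one-letter word). Reversing the left recursion then gives exactly the right
recursion for the reversed words.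
-/

theorem FreeMonoid.toList_reverse {α : Type*} (u : FreeMonoid α) :
    u.reverse.toList = u.toList.reverse := rfl

lemma wrd_append (l₁ l₂ : List Ltr) : wrd (l₁ ++ l₂) = wrd l₁ * wrd l₂ := by
  unfold wrd; rw [← map_mul]; rfl

lemma ew_nil : ew ([] : List Ltr) = 1 := by
  simp [ew, wrd]; rfl

lemma ew_cons (a : Ltr) (l : List Ltr) : ew (a :: l) = eH a * ew l := by
  rw [ew, ← List.singleton_append, wrd_append]
  fin_cases a <;> simp [eH, Xh, Yh, ew, pow_succ, mul_comm]

lemma ew_singleton (a : Ltr) : ew [a] = eH a := by rw [ew_cons, ew_nil, mul_one]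

lemma ew_append_singleton (l : List Ltr) (a : Ltr) : ew (l ++ [a]) = ew l * eH a := by
  induction l with
  | nil => rw [List.nil_append, ew_singleton, ew_nil, one_mul]
  | cons c cs ih => rw [List.cons_append, ew_cons, ih, ew_cons, mul_assoc]

lemma mstE_singleton_cons (a b : Ltr) (bs : List Ltr) :
    mstE [a] (b :: bs) = ew ((b :: bs).map (a * ·)) := by rw [mstE]

lemma mstE_cons_cons_singleton (a a' b : Ltr) (as : List Ltr) :
    mstE (a :: a' :: as) [b] = ew ((a :: a' :: as).map (· * b)) := by rw [mstE]

lemma mstE_cons_cons (a a' b b' : Ltr) (as bs : List Ltr) :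
    mstE (a :: a' :: as) (b :: b' :: bs) =
      eH (a * b) * mstE (a' :: as) (b :: b' :: bs)
      + eH (a * b) * mstE (a :: a' :: as) (b' :: bs)
      - eH (a * b) * Xh * mstE (a' :: as) (b' :: bs) := by rw [mstE]

lemma mstE_nil_left (l : List Ltr) : mstE [] l = 0 := by
  cases l <;> rw [mstE] <;> simp

lemma mstE_singleton_left (a : Ltr) {l : List Ltr} (hl : l ≠ []) :
    mstE [a] l = ew (l.map (a * ·)) := by
  obtain ⟨b, bs, rfl⟩ := List.exists_cons_of_ne_nil hl
  exact mstE_singleton_cons a b bs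

lemma mstE_singleton_right (b : Ltr) {l : List Ltr} (hl : l ≠ []) :
    mstE l [b] = ew (l.map (· * b)) := by
  match l with
  | [a] => rw [mstE_singleton_cons]; simp [mul_comm]
  | a :: a' :: as => exact mstE_cons_cons_singleton a a' b as

lemma mstE_comm : ∀ l₁ l₂ : List Ltr, mstE l₁ l₂ = mstE l₂ l₁
  | [], l₂ => by rw [mstE_nil_left, mstE_nil_right]
  | _ :: _, [] => by rw [mstE_nil_left, mstE_nil_right]
  | [a], b :: bs => by
      rw [mstE_singleton_cons, mstE_singleton_right a (List.cons_ne_nil b bs)]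
      simp_rw [mul_comm a]
  | a :: a' :: as, [b] => by
      rw [mstE_singleton_cons, mstE_cons_cons_singleton]
      simp_rw [mul_comm b]
  | a :: a' :: as, b :: b' :: bs => by
      rw [mstE_cons_cons, mstE_cons_cons, mstE_comm (a' :: as), mstE_comm (a :: a' :: as),
        mstE_comm (a' :: as) (b' :: bs), mul_comm a b]
      abel
termination_by l₁ l₂ => l₁.length + l₂.length

lemma mstE_pair_append_singleton (a' a b b' : Ltr) (bs : List Ltr) :
    mstE [a', a] ((b' :: bs) ++ [b]) =
      mstE [a'] ((b' :: bs) ++ [b]) * eH (a * b) + mstE [a', a] (b' :: bs) * eH (a * b)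
      - mstE [a'] (b' :: bs) * (Xh * eH (a * b)) := by
  induction bs generalizing b' with
  | nil =>
      simp only [List.cons_append, List.nil_append, mstE_cons_cons, mstE_singleton_cons,
        mstE_cons_cons_singleton, List.map_cons, List.map_nil, ew_cons, ew_nil]
      noncomm_ring
  | cons b'' bs ih =>
      simp only [List.cons_append] at ih ⊢
      rw [mstE_cons_cons, mstE_cons_cons, ih]
      simp only [mstE_singleton_cons, List.map_cons, List.map_append, List.map_nil,
        ew_append_singleton, ew_cons]
      noncomm_ring

lemma mstE_append_singleton : ∀ (l₁ l₂ : List Ltr) (a b : Ltr), l₁ ≠ [] → l₂ ≠ [] →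
    mstE (l₁ ++ [a]) (l₂ ++ [b]) =
      mstE l₁ (l₂ ++ [b]) * eH (a * b) + mstE (l₁ ++ [a]) l₂ * eH (a * b)
      - mstE l₁ l₂ * (Xh * eH (a * b))
  | [a'], b' :: bs, a, b, _, _ => mstE_pair_append_singleton a' a b b' bs
  | a' :: a'' :: as, [b'], a, b, _, _ => by
      have h := mstE_pair_append_singleton b' b a a' (a'' :: as)
      rw [mstE_comm, mstE_comm [b'], mstE_comm [b', b], mstE_comm [b'], mul_comm b a] at h
      simp only [List.cons_append, List.nil_append] at h ⊢
      rw [h]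
      abel
  | a' :: a'' :: as, b' :: b'' :: bs, a, b, _, _ => by
      have h₁ := mstE_append_singleton (a'' :: as) (b' :: b'' :: bs) a b (by simp) (by simp)
      have h₂ := mstE_append_singleton (a' :: a'' :: as) (b'' :: bs) a b (by simp) (by simp)
      have h₃ := mstE_append_singleton (a'' :: as) (b'' :: bs) a b (by simp) (by simp)
      simp only [List.cons_append] at h₁ h₂ h₃ ⊢
      rw [mstE_cons_cons, h₁, h₂, h₃, mstE_cons_cons a' a'' b' b'' (as ++ [a]) bs,
        mstE_cons_cons a' a'' b' b'' as (bs ++ [b]), mstE_cons_cons a' a'' b' b'' as bs]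
      noncomm_ring
termination_by l₁ l₂ => l₁.length + l₂.length

lemma revH_zero : revH 0 = 0 := MonoidAlgebra.mapDomain_zero _

lemma revH_add (f g : H) : revH (f + g) = revH f + revH g := MonoidAlgebra.mapDomain_add _ f g

lemma revH_smul (c : ℚ) (f : H) : revH (c • f) = c • revH f := by
  unfold revH; rw [MonoidAlgebra.coeff_smul, Finsupp.mapDomain_smul]; rfl

lemma revH_sub (f g : H) : revH (f - g) = revH f - revH g := by
  rw [sub_eq_add_neg, ← neg_one_smul ℚ g, revH_add, revH_smul, neg_one_smul, ← sub_eq_add_neg]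

lemma revH_single (m : FreeMonoid Ltr) (c : ℚ) :
    revH (MonoidAlgebra.single m c) = MonoidAlgebra.single m.reverse c :=
  MonoidAlgebra.mapDomain_single

lemma revH_mul (f g : H) : revH (f * g) = revH g * revH f := by
  induction f using MonoidAlgebra.induction_linear with
  | zero => simp [revH_zero]
  | add f f' hf hf' => rw [add_mul, revH_add, hf, hf', revH_add, mul_add]
  | single m c =>
    induction g using MonoidAlgebra.induction_linear with
    | zero => simp [revH_zero]
    | add g g' hg hg' => rw [mul_add, revH_add, hg, hg', revH_add, add_mul]
    | single m' c' =>
      simp only [MonoidAlgebra.single_mul_single, revH_single, FreeMonoid.reverse_mul, mul_comm c]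

lemma revH_ew (l : List Ltr) : revH (ew l) = ew l.reverse := by
  rw [ew, revH_smul, wrd, MonoidAlgebra.of_apply, revH_single, ew, List.count_reverse]
  rfl

lemma revH_eH (a : Ltr) : revH (eH a) = eH a := by
  rw [← ew_singleton, revH_ew, List.reverse_singleton]

lemma revH_Xh : revH Xh = Xh := revH_eH 0

theorem revH_mstE : ∀ l₁ l₂ : List Ltr, revH (mstE l₁ l₂) = mstE l₁.reverse l₂.reverse
  | [], l₂ => by rw [mstE_nil_left, revH_zero, List.reverse_nil, mstE_nil_left]
  | l₁, [] => by rw [mstE_nil_right, revH_zero, List.reverse_nil, mstE_nil_right]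
  | [a], b :: bs => by
      rw [mstE_singleton_cons, revH_ew, List.reverse_singleton,
        mstE_singleton_left a (by simp), List.map_reverse]
  | a :: a' :: as, [b] => by
      rw [mstE_cons_cons_singleton, revH_ew, List.reverse_singleton,
        mstE_singleton_right b (by simp), List.map_reverse]
  | a :: a' :: as, b :: b' :: bs => by
      have hrev₁ : (a :: a' :: as).reverse = (a' :: as).reverse ++ [a] := List.reverse_cons ..
      have hrev₂ : (b :: b' :: bs).reverse = (b' :: bs).reverse ++ [b] := List.reverse_cons ..
      rw [mstE_cons_cons, revH_sub, revH_add, revH_mul, revH_mul, revH_mul, revH_mul,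
        revH_eH, revH_Xh, revH_mstE (a' :: as), revH_mstE (a :: a' :: as),
        revH_mstE (a' :: as) (b' :: bs), hrev₁, hrev₂,
        mstE_append_singleton _ _ a b (by simp) (by simp), ← hrev₂]
termination_by l₁ l₂ => l₁.length + l₂.length

lemma mst_zero_left (g : H) : mst 0 g = 0 := by simp [mst]

lemma mst_zero_right (f : H) : mst f 0 = 0 := by simp [mst]

lemma mst_add_left (f f' g : H) : mst (f + f') g = mst f g + mst f' g := by
  unfold mst
  rw [MonoidAlgebra.coeff_add, Finsupp.sum_add_index' (by simp)]
  intro u c c'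
  simp only [add_mul, add_smul, Finsupp.sum_add]

lemma mst_add_right (f g g' : H) : mst f (g + g') = mst f g + mst f g' := by
  unfold mst
  rw [← Finsupp.sum_add]
  refine Finsupp.sum_congr fun u _ => ?_
  rw [MonoidAlgebra.coeff_add, Finsupp.sum_add_index' (by simp)]
  intro v c c'
  simp only [mul_add, add_mul, add_smul]

lemma mst_single_single (u v : FreeMonoid Ltr) (c d : ℚ) :
    mst (MonoidAlgebra.single u c) (MonoidAlgebra.single v d) =
      (c * d * (-1 : ℚ) ^ u.toList.count 1 * (-1 : ℚ) ^ v.toList.count 1) •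
        mstE u.toList v.toList := by
  simp [mst]

theorem stmt4_general (w₁ w₂ : H) :
    revH (mst w₁ w₂) = mst (revH w₁) (revH w₂) := by
  induction w₁ using MonoidAlgebra.induction_linear with
  | zero => rw [mst_zero_left, revH_zero, mst_zero_left]
  | add f f' hf hf' => rw [mst_add_left, revH_add, hf, hf', revH_add, mst_add_left]
  | single u c =>
    induction w₂ using MonoidAlgebra.induction_linear with
    | zero => rw [mst_zero_right, revH_zero, mst_zero_right]
    | add g g' hg hg' => rw [mst_add_right, revH_add, hg, hg', revH_add, mst_add_right]
    | single v d =>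
      rw [revH_single, revH_single, mst_single_single, mst_single_single, revH_smul, revH_mstE,
        FreeMonoid.toList_reverse, FreeMonoid.toList_reverse, List.count_reverse, List.count_reverse]

/-- For `w₁, w₂ ∈ 𝔥'`, the reversal of `w₁ ⊛̃ w₂` equals
`(reversal of w₁) ⊛̃ (reversal of w₂)`. -/
theorem stmt4 (w₁ w₂ : H) (h₁ : w₁.coeff (1 : FreeMonoid Ltr) = 0)
    (h₂ : w₂.coeff (1 : FreeMonoid Ltr) = 0) :
    revH (mst w₁ w₂) = mst (revH w₁) (revH w₂) :=
  stmt4_general w₁ w₂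
end

section
/- For every n ≥ 0 and w ∈ 𝔥, one has Σ_{j=0}^{n} f_j(y x^{n-j} w) = y f_n(w). -/
open scoped BigOperators

/-- `dn n w = yⁿ ⋄ w` where `⋄` is the bilinear map with `1⋄w = w⋄1 = w`,
`yw₁ ⋄ yw₂ = y(yw₁ ⋄ w₂) - y(w₁ ⋄ xw₂)` and `yw₁ ⋄ xw₂ = x(yw₁ ⋄ w₂) + y(w₁ ⋄ xw₂)`. -/
noncomputable def dn : ℕ → List Ltr → H
  | 0, u => wrd u
  | n + 1, [] => wrd (List.replicate (n + 1) 1)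
  | n + 1, a :: u =>
      if a = 0 then Xh * dn (n + 1) u + Yh * dn n (a :: u)
      else Yh * dn (n + 1) u - Yh * dn n ((0 : Ltr) :: u)
termination_by n u => (n, u.length)

/-- `dia n f = yⁿ ⋄ f`, extended linearly. -/
noncomputable def dia (n : ℕ) (f : H) : H := f.coeff.sum fun u c => c • dn n u.toList

/-- `f_n : 𝔥 → 𝔥` for `n ∈ ℤ`: `f_n = 0` for `n < 0`, `f₀ = id`, and
`f_n(w) = yⁿ ⋄ w - (y^{n-1} ⋄ w)y` for `n ≥ 1`. -/
noncomputable def fZ (n : ℤ) (f : H) : H :=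
  if n < 0 then 0 else if n = 0 then f else dia n.toNat f - dia (n.toNat - 1) f * Yh

/-! The recursion `y^{m+1} ⋄ yw = y(y^{m+1} ⋄ w) - y(y^m ⋄ xw)` gives
`f_{m+1}(yw) = y f_{m+1}(w) - y f_m(xw)`. Peeling off the term `j = n + 1`, the remaining sum is
the statement for `xw`, so induction on `n` closes the argument. -/

lemma dia_single (n : ℕ) (u : FreeMonoid Ltr) (c : ℚ) :
    dia n (MonoidAlgebra.single u c) = c • dn n u.toList := by
  rw [dia, MonoidAlgebra.coeff_single]
  exact Finsupp.sum_single_index (zero_smul _ _)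

lemma dia_zero_right (n : ℕ) : dia n 0 = 0 := by
  rw [dia, MonoidAlgebra.coeff_zero]
  exact Finsupp.sum_zero_index

lemma dia_add (n : ℕ) (f g : H) : dia n (f + g) = dia n f + dia n g := by
  rw [dia, MonoidAlgebra.coeff_add]
  exact Finsupp.sum_add_index' (fun _ => zero_smul _ _) (fun _ _ _ => add_smul _ _ _)

lemma dia_zero_left (f : H) : dia 0 f = f := by
  induction f using MonoidAlgebra.induction_linear with
  | zero => exact dia_zero_right 0
  | add f g hf hg => rw [dia_add, hf, hg]
  | single u c => simp [dia_single, dn, wrd]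

lemma wrd_singleton_mul_single (a : Ltr) (u : FreeMonoid Ltr) (c : ℚ) :
    wrd [a] * MonoidAlgebra.single u c =
      MonoidAlgebra.single (FreeMonoid.ofList (a :: u.toList)) c := by
  rw [wrd, MonoidAlgebra.of_apply, MonoidAlgebra.single_mul_single, one_mul]
  rfl

lemma dn_succ_cons_one (n : ℕ) (l : List Ltr) :
    dn (n + 1) (1 :: l) = Yh * dn (n + 1) l - Yh * dn n (0 :: l) := by
  rw [dn]
  simp

lemma dia_succ_Yh_mul (n : ℕ) (f : H) :
    dia (n + 1) (Yh * f) = Yh * dia (n + 1) f - Yh * dia n (Xh * f) := by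
  induction f using MonoidAlgebra.induction_linear with
  | zero => simp [dia_zero_right]
  | add f g hf hg =>
      rw [mul_add, dia_add, dia_add, mul_add Xh, dia_add, hf, hg]
      noncomm_ring
  | single u c =>
      rw [Yh, Xh, wrd_singleton_mul_single, wrd_singleton_mul_single, dia_single, dia_single,
        dia_single, FreeMonoid.toList_ofList, FreeMonoid.toList_ofList, dn_succ_cons_one,
        Yh, mul_smul_comm, mul_smul_comm, smul_sub]

lemma fZ_zero (f : H) : fZ 0 f = f := by
  simp [fZ]

lemma fZ_natCast_succ (m : ℕ) (f : H) :
    fZ ((m + 1 : ℕ) : ℤ) f = dia (m + 1) f - dia m f * Yh := by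
  have h1 : ¬((m : ℤ) + 1 < 0) := by omega
  have h2 : (m : ℤ) + 1 ≠ 0 := by omega
  simp [fZ, h1, h2]

lemma fZ_natCast_succ_Yh_mul (m : ℕ) (w : H) :
    fZ ((m + 1 : ℕ) : ℤ) (Yh * w) =
      Yh * fZ ((m + 1 : ℕ) : ℤ) w - Yh * fZ (m : ℤ) (Xh * w) := by
  cases m with
  | zero =>
      rw [Nat.cast_zero, fZ_zero, fZ_natCast_succ, fZ_natCast_succ, dia_succ_Yh_mul,
        dia_zero_left, dia_zero_left, dia_zero_left]
      noncomm_ring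
  | succ m =>
      rw [fZ_natCast_succ, fZ_natCast_succ, fZ_natCast_succ, dia_succ_Yh_mul, dia_succ_Yh_mul]
      noncomm_ring

/-- For `n ≥ 0` and `w ∈ 𝔥`: `Σ_{j=0}^{n} f_j(y x^{n-j} w) = y f_n(w)`. -/
theorem stmt8 (n : ℕ) (w : H) :
    ∑ j ∈ Finset.range (n + 1), fZ (j : ℤ) (Yh * Xh ^ (n - j) * w) = Yh * fZ (n : ℤ) w := by
  induction n generalizing w with
  | zero => simp [fZ_zero]
  | succ n ih =>
      have peel_x : ∀ j ∈ Finset.range (n + 1),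
          fZ (j : ℤ) (Yh * Xh ^ (n + 1 - j) * w) =
            fZ (j : ℤ) (Yh * Xh ^ (n - j) * (Xh * w)) := by
        intro j hj
        rw [Nat.sub_add_comm (Finset.mem_range_succ_iff.mp hj), pow_succ]
        noncomm_ring
      rw [Finset.sum_range_succ, Finset.sum_congr rfl peel_x, ih, Nat.sub_self, pow_zero, mul_one,
        fZ_natCast_succ_Yh_mul]
      abel
end
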